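/- (Ratio compatibility.) Let s ≥ 1 and nonnegative integers m₁, n₁, m₂, n₂, m₃, n₃ satisfy m₁ + n₁s = m₂ + n₂s, n₁ ≠ n₂, and m₃ + n₃s = r + m₁ + n₁s − 2s for a real r. With a_{m,n}^s := (m)_s^{n+2}/(m+2−n+s)_{s+1}^{n+1}, c_{m,n+2}^{0,s} := (s+2)(m+(n+1)s+1)/((m+ns)(m+(n+1)s)), c_{m,n}^{r,s} := (s+2)(r+m+1+(n−1)s)/(r+m+(n−2)s)_s^2, b_{m,n}^{r,s} := ζ_{m,n}^{r,s,n} − (r+m+ns+2)(m)_s^n/(m+2−n+s)_{s+1}^n, and ζ as defined by ζ_{m,n}^{r,s,i} := (r+m+2)(r+m)_s^i/(r+m−n+3)_{s+1}^i − Σ_{l=1}^{i} [(m)_s^{l-1}(r+m+ls)_s^{i-l}/((r+m−n+3+l(s+1))_{s+1}^{i-l}(m+2−n+s)_{s+1}^{l})]·(l²s − nls − 2ls + lm + lr + s + ns + rs − nm + r − m − nr), the identity c_{m₃,n₃+2}^{0,s} = [ b_{m₁,n₁}^{r,s} c_{m₁,n₁}^{r,s} / a_{m₁,n₁}^s − b_{m₂,n₂}^{r,s}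 c_{m₂,n₂}^{r,s} / a_{m₂,n₂}^s ] / [ ζ_{m₁,n₁}^{r,s,n₁} / a_{m₁,n₁}^s − ζ_{m₂,n₂}^{r,s,n₂} / a_{m₂,n₂}^s ] holds whenever all denominators (including the bracketed difference in the denominator) are nonzero. -/
import Mathlib


namespace BT14

open Finset

/-- The Pochhammer k-symbol (a)_k^n = ∏_{j=0}^{n-1} (a + j k). -/
noncomputable def poch (a k : ℝ) (n : ℕ) : ℝ := ∏ j ∈ Finset.range n, (a + j * k)

/-- ζ_{m,n}^{r,s,i}. -/
noncomputable def zeta (r : ℝ) (s m n : ℕ) (i : ℕ) : ℝ :=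
  (r + m + 2) * poch (r + m) (s : ℝ) i / poch (r + m - n + 3) ((s : ℝ) + 1) i -
    ∑ l ∈ Finset.Icc 1 i,
      poch (m : ℝ) (s : ℝ) (l - 1) * poch (r + m + l * s) (s : ℝ) (i - l) /
          (poch (r + m - n + 3 + l * ((s : ℝ) + 1)) ((s : ℝ) + 1) (i - l) *
            poch ((m : ℝ) + 2 - n + s) ((s : ℝ) + 1) l) *
        ((l : ℝ) ^ 2 * s - n * l * s - 2 * l * s + l * m + l * r + s + n * s + r * s -
          (n : ℝ) * m + r - m - n * r)

/-- a_{m,n}^s = (m)_s^{n+2} / (m+2-n+s)_{s+1}^{n+1}. -/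
noncomputable def aco (s m n : ℕ) : ℝ :=
  poch (m : ℝ) (s : ℝ) (n + 2) / poch ((m : ℝ) + 2 - n + s) ((s : ℝ) + 1) (n + 1)

/-- c_{m,n+2}^{0,s} = (s+2)(m+(n+1)s+1) / ((m+ns)(m+(n+1)s)). -/
noncomputable def c0 (s m n : ℕ) : ℝ :=
  ((s : ℝ) + 2) * ((m : ℝ) + (n + 1) * s + 1) / (((m : ℝ) + n * s) * ((m : ℝ) + (n + 1) * s))

/-- c_{m,n}^{r,s} = (s+2)(r+m+1+(n-1)s) / (r+m+(n-2)s)_s^2. -/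
noncomputable def crs (r : ℝ) (s m n : ℕ) : ℝ :=
  ((s : ℝ) + 2) * (r + m + 1 + ((n : ℝ) - 1) * s) / poch (r + m + ((n : ℝ) - 2) * s) (s : ℝ) 2

/-- b_{m,n}^{r,s} = ζ_{m,n}^{r,s,n} - (r+m+ns+2)(m)_s^n / (m+2-n+s)_{s+1}^n. -/
noncomputable def brs (r : ℝ) (s m n : ℕ) : ℝ :=
  zeta r s m n n -
    (r + m + n * s + 2) * poch (m : ℝ) (s : ℝ) n / poch ((m : ℝ) + 2 - n + s) ((s : ℝ) + 1) n

lemma poch_two (a k : ℝ) : poch a k 2 = a * (a + k) := by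
  simp [poch, Finset.prod_range_succ]

lemma poch_succ (a k : ℝ) (n : ℕ) : poch a k (n + 1) = poch a k n * (a + n * k) := by
  simp [poch, Finset.prod_range_succ]

lemma crs_eq (r : ℝ) (s m n m₃ n₃ : ℕ)
    (h : (m₃ : ℝ) + n₃ * s = r + m + n * s - 2 * s)
    (hq : poch (r + m + ((n : ℝ) - 2) * s) (s : ℝ) 2 ≠ 0)
    (hc3a : (m₃ : ℝ) + n₃ * s ≠ 0) (hc3b : (m₃ : ℝ) + (n₃ + 1) * s ≠ 0) :
    crs r s m n = c0 s m₃ n₃ := by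
  rw [poch_two] at hq
  unfold crs c0
  rw [poch_two, div_eq_div_iff hq (mul_ne_zero hc3a hc3b)]
  linear_combination ((s : ℝ) + 2) * (((m₃ : ℝ) + n₃ * s) * (r + m + ((n : ℝ) - 2) * s)
    + ((s : ℝ) + 1) * (((m₃ : ℝ) + n₃ * s) + (r + m + ((n : ℝ) - 2) * s) + s)) * h

lemma Ediv (s m n : ℕ) (r : ℝ)
    (hnum : poch (m : ℝ) (s : ℝ) (n + 2) ≠ 0)
    (hpn : poch ((m : ℝ) + 2 - n + s) ((s : ℝ) + 1) n ≠ 0)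
    (hpn1 : poch ((m : ℝ) + 2 - n + s) ((s : ℝ) + 1) (n + 1) ≠ 0) :
    ((r + m + n * s + 2) * poch (m : ℝ) (s : ℝ) n /
        poch ((m : ℝ) + 2 - n + s) ((s : ℝ) + 1) n) / aco s m n =
      (r + ((m : ℝ) + n * s) + 2) * (((m : ℝ) + n * s) + s + 2) /
        ((((m : ℝ) + n * s)) * (((m : ℝ) + n * s) + s)) := by
  have f1 : poch (m : ℝ) (s : ℝ) (n + 2) =
      poch (m : ℝ) (s : ℝ) n * (((m : ℝ) + n * s) * (((m : ℝ) + n * s) + s)) := by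
    rw [show n + 2 = (n + 1) + 1 from rfl, poch_succ, poch_succ]
    push_cast; ring
  have f2 : poch ((m : ℝ) + 2 - n + s) ((s : ℝ) + 1) (n + 1) =
      poch ((m : ℝ) + 2 - n + s) ((s : ℝ) + 1) n * (((m : ℝ) + n * s) + s + 2) := by
    rw [poch_succ]; ring
  rw [f1] at hnum
  have h0 : poch (m : ℝ) (s : ℝ) n ≠ 0 := fun h => hnum (by rw [h]; ring)
  have hA : ((m : ℝ) + n * s) ≠ 0 := fun h => hnum (by rw [h]; ring)
  have hB : ((m : ℝ) + n * s) + s ≠ 0 := fun h => hnum (by rw [h]; ring)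
  have hC : ((m : ℝ) + n * s) + s + 2 ≠ 0 := by
    intro h; rw [f2, h, mul_zero] at hpn1; exact hpn1 rfl
  unfold aco
  rw [f1, f2]
  field_simp
  ring

/-- Ratio compatibility:
c_{m₃,n₃+2}^{0,s} = (b₁c₁/a₁ - b₂c₂/a₂) / (ζ₁/a₁ - ζ₂/a₂). -/
theorem ratio_compatibility (s m₁ n₁ m₂ n₂ m₃ n₃ : ℕ) (r : ℝ) (hs : 1 ≤ s)
    (hidx : m₁ + n₁ * s = m₂ + n₂ * s) (hne : n₁ ≠ n₂)
    (hidx3 : (m₃ : ℝ) + n₃ * s = r + m₁ + n₁ * s - 2 * s)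
    (ha1 : aco s m₁ n₁ ≠ 0) (ha2 : aco s m₂ n₂ ≠ 0)
    (hdiff : zeta r s m₁ n₁ n₁ / aco s m₁ n₁ - zeta r s m₂ n₂ n₂ / aco s m₂ n₂ ≠ 0)
    (hc3a : (m₃ : ℝ) + n₃ * s ≠ 0) (hc3b : (m₃ : ℝ) + (n₃ + 1) * s ≠ 0)
    (hp1 : ∀ j ≤ n₁ + 1, poch ((m₁ : ℝ) + 2 - n₁ + s) ((s : ℝ) + 1) j ≠ 0)
    (hp2 : ∀ j ≤ n₂ + 1, poch ((m₂ : ℝ) + 2 - n₂ + s) ((s : ℝ) + 1) j ≠ 0)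
    (hz1 : poch (r + m₁ - n₁ + 3) ((s : ℝ) + 1) n₁ ≠ 0)
    (hz2 : poch (r + m₂ - n₂ + 3) ((s : ℝ) + 1) n₂ ≠ 0)
    (hz1' : ∀ l ∈ Finset.Icc 1 n₁,
      poch (r + m₁ - n₁ + 3 + l * ((s : ℝ) + 1)) ((s : ℝ) + 1) (n₁ - l) ≠ 0)
    (hz2' : ∀ l ∈ Finset.Icc 1 n₂,
      poch (r + m₂ - n₂ + 3 + l * ((s : ℝ) + 1)) ((s : ℝ) + 1) (n₂ - l) ≠ 0)
    (hq1 : poch (r + m₁ + ((n₁ : ℝ) - 2) * s) (s : ℝ) 2 ≠ 0)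
    (hq2 : poch (r + m₂ + ((n₂ : ℝ) - 2) * s) (s : ℝ) 2 ≠ 0) :
    c0 s m₃ n₃ =
      (brs r s m₁ n₁ * crs r s m₁ n₁ / aco s m₁ n₁ -
          brs r s m₂ n₂ * crs r s m₂ n₂ / aco s m₂ n₂) /
        (zeta r s m₁ n₁ n₁ / aco s m₁ n₁ - zeta r s m₂ n₂ n₂ / aco s m₂ n₂) := by
  have hidxR : (m₁ : ℝ) + n₁ * s = (m₂ : ℝ) + n₂ * s := by exact_mod_cast hidx
  have hidx3' : (m₃ : ℝ) + n₃ * s = r + m₂ + n₂ * s - 2 * s := by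
    rw [hidx3]; linarith
  have hnum1 : poch (m₁ : ℝ) (s : ℝ) (n₁ + 2) ≠ 0 := by
    intro h; apply ha1; unfold aco; rw [h, zero_div]
  have hnum2 : poch (m₂ : ℝ) (s : ℝ) (n₂ + 2) ≠ 0 := by
    intro h; apply ha2; unfold aco; rw [h, zero_div]
  have e1 := Ediv s m₁ n₁ r hnum1 (hp1 n₁ (Nat.le_succ n₁)) (hp1 (n₁ + 1) le_rfl)
  have e2 := Ediv s m₂ n₂ r hnum2 (hp2 n₂ (Nat.le_succ n₂)) (hp2 (n₂ + 1) le_rfl)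
  have key : ((r + m₁ + n₁ * s + 2) * poch (m₁ : ℝ) (s : ℝ) n₁ /
        poch ((m₁ : ℝ) + 2 - n₁ + s) ((s : ℝ) + 1) n₁) / aco s m₁ n₁ =
      ((r + m₂ + n₂ * s + 2) * poch (m₂ : ℝ) (s : ℝ) n₂ /
        poch ((m₂ : ℝ) + 2 - n₂ + s) ((s : ℝ) + 1) n₂) / aco s m₂ n₂ := by
    rw [e1, e2, hidxR]
  have hc1 : crs r s m₁ n₁ = c0 s m₃ n₃ := crs_eq r s m₁ n₁ m₃ n₃ hidx3 hq1 hc3a hc3b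
  have hc2 : crs r s m₂ n₂ = c0 s m₃ n₃ := crs_eq r s m₂ n₂ m₃ n₃ hidx3' hq2 hc3a hc3b
  have h1 : brs r s m₁ n₁ * crs r s m₁ n₁ / aco s m₁ n₁ -
      brs r s m₂ n₂ * crs r s m₂ n₂ / aco s m₂ n₂ =
      c0 s m₃ n₃ * (zeta r s m₁ n₁ n₁ / aco s m₁ n₁ - zeta r s m₂ n₂ n₂ / aco s m₂ n₂) := by
    rw [hc1, hc2]
    unfold brs
    linear_combination (-(c0 s m₃ n₃)) * key
  rw [h1, mul_div_assoc, div_self hdiff, mul_one]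


end BT14
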